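/- arXiv:2605.00388 — 2 statements merged into one kernel-verified Lean document; each statement's English description precedes it below -/
import Mathlib

section
/- (Proposition 3.2.2, inclusion part.) Assume the MPEC setup with F continuously differentiable and g twice continuously differentiable, and let z̄ ∈ 𝓕. Assume the CRCQ holds at z̄: there is a neighborhood U of z̄ such that for every subset J ⊆ 𝓘(z̄), the family of gradients {∇_y g_i(z) : i ∈ J} has the same rank for all z ∈ U, and assume M(z) is nonempty for every z ∈ 𝓕 ∩ U. Then for every dz = (dx, dy) ∈ T(z̄; 𝓕), one has dz ∈ T(z̄; Z) and there exists an extreme point λ̄ of the polyhedron M(z̄) such that dy solves AVI(∇_x L(z̄, λ̄) dx, ∇_y L(z̄, λ̄), K(z̄, λ̄; dx)); that is, T(z̄; 𝓕) ⊆ 𝓛^e(z̄; 𝓕). -/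
open Filter Topology BigOperators

noncomputable section

/-- Vectors in `ℝ^n`. -/
abbrev Vec (n : ℕ) := Fin n → ℝ

/-- Euclidean inner product on `ℝ^n`. -/
def dotp {n : ℕ} (a b : Vec n) : ℝ := ∑ i, a i * b i

/-- The tangent cone to `S` at `z`: all `d` such that there exist points `zs k ∈ S`
with `zs k → z` and scalars `ts k ↓ 0` with `(zs k - z) / ts k → d`. -/
def tangentCone {E : Type*} [NormedAddCommGroup E] [NormedSpace ℝ E]
    (S : Set E) (z : E) : Set E :=
  {d | ∃ (zs : ℕ → E) (ts : ℕ → ℝ),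
    (∀ k, zs k ∈ S) ∧ Tendsto zs atTop (𝓝 z) ∧
    (∀ k, 0 < ts k) ∧ Tendsto ts atTop (𝓝 0) ∧
    Tendsto (fun k => (ts k)⁻¹ • (zs k - z)) atTop (𝓝 d)}

variable {n m l : ℕ}

/-- Lower-level feasible set `C(x) = {y : g(x,y) ≤ 0}`. -/
def lowerC (g : Vec n × Vec m → Vec l) (x : Vec n) : Set (Vec m) :=
  {y | ∀ i, g (x, y) i ≤ 0}

/-- Lower-level VI solution set `S(x) = SOL(F(x,·), C(x))`. -/
def lowerS (F : Vec n × Vec m → Vec m) (g : Vec n × Vec m → Vec l)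
    (x : Vec n) : Set (Vec m) :=
  {y | y ∈ lowerC g x ∧ ∀ v ∈ lowerC g x, 0 ≤ dotp (F (x, y)) (v - y)}

/-- The MPEC feasible set `𝓕 = {(x,y) ∈ Z : y ∈ S(x)}`. -/
def feasSet (F : Vec n × Vec m → Vec m) (g : Vec n × Vec m → Vec l)
    (Z : Set (Vec n × Vec m)) : Set (Vec n × Vec m) :=
  {z | z ∈ Z ∧ z.2 ∈ lowerS F g z.1}

/-- `j`-th component of the gradient `∇_y g_i(z)`. -/
def gradYg (g : Vec n × Vec m → Vec l) (i : Fin l) (z : Vec n × Vec m) : Vec m :=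
  fun j => fderiv ℝ (fun p => g p i) z (0, Pi.single j 1)

/-- `⟨∇_x g_i(z̄), dx⟩`, expressed via the Fréchet derivative in the `x`-slot. -/
def dgX (g : Vec n × Vec m → Vec l) (i : Fin l) (z : Vec n × Vec m) (dx : Vec n) : ℝ :=
  fderiv ℝ (fun p => g p i) z (dx, 0)

/-- `⟨∇_y g_i(z̄), dy⟩`, expressed via the Fréchet derivative in the `y`-slot. -/
def dgY (g : Vec n × Vec m → Vec l) (i : Fin l) (z : Vec n × Vec m) (dy : Vec m) : ℝ :=
  fderiv ℝ (fun p => g p i) z (0, dy)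

/-- Multiplier set `M(z)` of the lower-level VI. -/
def multSet (F : Vec n × Vec m → Vec m) (g : Vec n × Vec m → Vec l)
    (z : Vec n × Vec m) : Set (Vec l) :=
  {lam | (∀ i, 0 ≤ lam i) ∧
    (∀ j, F z j + ∑ i, lam i * gradYg g i z j = 0) ∧
    (∑ i, lam i * g z i = 0)}

/-- VI Lagrangian `L(z, λ) = F(z) + Σ_i λ_i ∇_y g_i(z)`. -/
def viLag (F : Vec n × Vec m → Vec m) (g : Vec n × Vec m → Vec l)
    (z : Vec n × Vec m) (lam : Vec l) : Vec m :=
  fun j => F z j + ∑ i, lam i * gradYg g i z j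

/-- Lifted critical cone `K(z̄, λ)`. -/
def liftedCone (g : Vec n × Vec m → Vec l) (zbar : Vec n × Vec m) (lam : Vec l) :
    Set (Vec n × Vec m) :=
  {d | ∀ i, g zbar i = 0 →
      (lam i = 0 → dgX g i zbar d.1 + dgY g i zbar d.2 ≤ 0) ∧
      (0 < lam i → dgX g i zbar d.1 + dgY g i zbar d.2 = 0)}

/-- Directional critical set `K(z̄, λ; dx)`. -/
def dirCrit (g : Vec n × Vec m → Vec l) (zbar : Vec n × Vec m) (lam : Vec l)
    (dx : Vec n) : Set (Vec m) :=
  {dy | (dx, dy) ∈ liftedCone g zbar lam}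

/-- `∇_x L(z̄, λ) dx`, the partial Jacobian of the VI Lagrangian in `x` applied to `dx`. -/
def jacLx (F : Vec n × Vec m → Vec m) (g : Vec n × Vec m → Vec l)
    (zbar : Vec n × Vec m) (lam : Vec l) (dx : Vec n) : Vec m :=
  fun j => fderiv ℝ (fun z => viLag F g z lam j) zbar (dx, 0)

/-- `∇_y L(z̄, λ) dy`, the partial Jacobian of the VI Lagrangian in `y` applied to `dy`. -/
def jacLy (F : Vec n × Vec m → Vec m) (g : Vec n × Vec m → Vec l)
    (zbar : Vec n × Vec m) (lam : Vec l) (dy : Vec m) : Vec m :=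
  fun j => fderiv ℝ (fun z => viLag F g z lam j) zbar (0, dy)

/-- `dy` solves `AVI(∇_x L(z̄,λ) dx, ∇_y L(z̄,λ), K(z̄,λ;dx))`. -/
def solvesAVI (F : Vec n × Vec m → Vec m) (g : Vec n × Vec m → Vec l)
    (zbar : Vec n × Vec m) (lam : Vec l) (dx : Vec n) (dy : Vec m) : Prop :=
  dy ∈ dirCrit g zbar lam dx ∧
  ∀ v ∈ dirCrit g zbar lam dx,
    0 ≤ dotp (jacLx F g zbar lam dx + jacLy F g zbar lam dy) (v - dy)

/-- SBCQ at `zbar`: every feasible sequence converging to `zbar` admits a bounded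
sequence of multipliers. -/
def SBCQ (F : Vec n × Vec m → Vec m) (g : Vec n × Vec m → Vec l)
    (Z : Set (Vec n × Vec m)) (zbar : Vec n × Vec m) : Prop :=
  ∀ zs : ℕ → Vec n × Vec m, (∀ k, zs k ∈ feasSet F g Z) → Tendsto zs atTop (𝓝 zbar) →
    ∃ lams : ℕ → Vec l, (∀ k, lams k ∈ multSet F g (zs k)) ∧ ∃ C : ℝ, ∀ k, ‖lams k‖ ≤ C

/-- Rank of the family of gradients `{∇_y g_i(z) : i ∈ J}`. -/
def gradRank (g : Vec n × Vec m → Vec l) (J : Set (Fin l)) (z : Vec n × Vec m) : ℕ :=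
  Module.finrank ℝ (Submodule.span ℝ ((fun i => gradYg g i z) '' J))

/-- CRCQ at `zbar`: on some neighborhood `U` of `zbar`, for every subset `J` of the
active index set `𝓘(zbar)`, the family `{∇_y g_i(z) : i ∈ J}` has constant rank on `U`. -/
def CRCQ (g : Vec n × Vec m → Vec l) (zbar : Vec n × Vec m) (U : Set (Vec n × Vec m)) : Prop :=
  ∀ J : Set (Fin l), (∀ i ∈ J, g zbar i = 0) →
    ∀ z ∈ U, gradRank g J z = gradRank g J zbar

/-!
Take a tangent sequence `z_k → z̄` in `𝓕` with `(z_k - z̄) / t_k → dz`. By a conic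
Carathéodory argument each `M(z_k)` contains a multiplier `λ_k` whose support indexes linearly
independent gradients `∇_y g_i(z_k)`; along a subsequence this support is a constant set `J`.
CRCQ carries the linear independence of `{∇_y g_i : i ∈ J}` over to `z̄`, which bounds `(λ_k)`,
so a further subsequence converges to some `λ̄ ∈ M(z̄)` supported in `J`: an extreme point of
`M(z̄)`. Finally `L(z_k, λ̄) = ∑ (λ̄_i - λ_{k,i}) ∇_y g_i(z_k)` because `L(z_k, λ_k) = 0`; pairing
with `v - dy`, dividing by `t_k` and letting `k → ∞` gives the AVI inequality, since for `v` in
`K(z̄, λ̄; dx)` every term `(λ̄_i - λ_{k,i}) ⟨∇_y g_i(z̄), v - dy⟩` is nonnegative.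
-/

open Function

theorem linearIndepOn_of_finrank_span_image_eq {ι K M : Type*} [Field K] [AddCommGroup M]
    [Module K M] {v w : ι → M} {s : Set ι} (hs : s.Finite) (hv : LinearIndepOn K v s)
    (h : Module.finrank K (Submodule.span K (v '' s)) =
      Module.finrank K (Submodule.span K (w '' s))) : LinearIndepOn K w s := by
  have := hs.fintype
  rw [LinearIndepOn, linearIndependent_iff_card_eq_finrank_span, Set.finrank,
    ← Set.image_eq_range] at hv ⊢
  exact hv.trans h

section
variable {ι E : Type*} [Fintype ι] [AddCommGroup E] [Module ℝ E]

theorem LinearIndepOn.eq_zero_of_sum_smul_eq_zero {v : ι → E} {s : Set ι}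
    (hv : LinearIndepOn ℝ v s) {c : ι → ℝ} (hc : support c ⊆ s)
    (hsum : ∑ i, c i • v i = 0) : c = 0 := by
  have := linearIndepOn_iff.mp hv (Finsupp.equivFunOnFinite.symm c)
    (by simpa [Finsupp.mem_supported] using hc)
    (by simpa [Finsupp.linearCombination_apply, Finsupp.sum_fintype] using hsum)
  simpa using congrArg (⇑) this

theorem exists_pos_sum_smul_eq_zero_of_not_linearIndepOn {v : ι → E} {s : Set ι}
    (hv : ¬ LinearIndepOn ℝ v s) :
    ∃ d : ι → ℝ, support d ⊆ s ∧ ∑ i, d i • v i = 0 ∧ ∃ i, 0 < d i := by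
  obtain ⟨f, hfs, hf0, hne⟩ := linearDepOn_iff'.mp hv
  have hsupp : support f ⊆ s := by simpa [Finsupp.mem_supported] using hfs
  have hsum : ∑ i, f i • v i = 0 := by
    simpa [Finsupp.linearCombination_apply, Finsupp.sum_fintype] using hf0
  obtain ⟨i, hi⟩ : ∃ i, f i ≠ 0 := by simpa [DFunLike.ext_iff] using hne
  rcases hi.lt_or_gt with hneg | hpos
  · refine ⟨-f, by simpa using hsupp, by simp [neg_smul, hsum], i, by simpa using hneg⟩
  · exact ⟨f, hsupp, hsum, i, hpos⟩

theorem exists_nonneg_sub_smul_apply_eq_zero {c d : ι → ℝ} (hc : 0 ≤ c) {j : ι} (hj : 0 < d j) :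
    ∃ θ : ℝ, 0 ≤ c - θ • d ∧ ∃ i, 0 < d i ∧ (c - θ • d) i = 0 := by
  classical
  obtain ⟨i₀, hi₀, hmin⟩ := (Finset.univ.filter (0 < d ·)).exists_min_image (fun i => c i / d i)
    ⟨j, by simpa using hj⟩
  have hd₀ : 0 < d i₀ := (Finset.mem_filter.mp hi₀).2
  refine ⟨c i₀ / d i₀, fun i => ?_, i₀, hd₀, by simp [div_mul_cancel₀ _ hd₀.ne']⟩
  simp only [Pi.zero_apply, Pi.sub_apply, Pi.smul_apply, smul_eq_mul, sub_nonneg]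
  rcases le_or_gt (d i) 0 with hdi | hdi
  · exact (mul_nonpos_of_nonneg_of_nonpos (div_nonneg (hc i₀) hd₀.le) hdi).trans (hc i)
  · exact (le_div_iff₀ hdi).mp (hmin i (by simpa using hdi))

theorem exists_linearIndepOn_support_sum_smul_eq (v : ι → E) {c : ι → ℝ} (hc : 0 ≤ c) :
    ∃ μ : ι → ℝ, 0 ≤ μ ∧ support μ ⊆ support c ∧ ∑ i, μ i • v i = ∑ i, c i • v i ∧
      LinearIndepOn ℝ v (support μ) := by
  induction hn : (support c).ncard using Nat.strong_induction_on generalizing c with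
  | _ n ih =>
  by_cases hli : LinearIndepOn ℝ v (support c)
  · exact ⟨c, hc, subset_rfl, rfl, hli⟩
  obtain ⟨d, hds, hdv, j, hj⟩ := exists_pos_sum_smul_eq_zero_of_not_linearIndepOn hli
  obtain ⟨θ, hθ, i, hi, hci⟩ := exists_nonneg_sub_smul_apply_eq_zero hc hj
  have hsub : support (c - θ • d) ⊂ support c := by
    refine Set.ssubset_iff_of_subset (fun k hk => ?_) |>.mpr ⟨i, hds hi.ne', notMem_support.mpr hci⟩
    by_contra hck
    exact hk (by simp [notMem_support.mp hck, notMem_support.mp fun h => hck (hds h)])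
  obtain ⟨μ, hμ, hμs, hμv, hμli⟩ :=
    ih _ (hn ▸ Set.ncard_lt_ncard hsub (Set.toFinite _)) hθ rfl
  refine ⟨μ, hμ, hμs.trans hsub.subset, ?_, hμli⟩
  simp [hμv, sub_smul, Finset.sum_sub_distrib, mul_smul, ← Finset.smul_sum, hdv]

theorem mem_extremePoints_of_linearIndepOn {v : ι → E} {w : E} {M : Set (ι → ℝ)}
    (hM : ∀ μ ∈ M, 0 ≤ μ ∧ ∑ i, μ i • v i = w) {lam : ι → ℝ} (hlam : lam ∈ M) {s : Set ι}
    (hs : support lam ⊆ s) (hv : LinearIndepOn ℝ v s) : lam ∈ M.extremePoints ℝ := by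
  refine ⟨hlam, fun x hx y hy ⟨a, b, ha, hb, hab, hxy⟩ => ?_⟩
  have hzero : ∀ i, lam i = 0 → x i = 0 ∧ y i = 0 := fun i hi => by
    have h := congrFun hxy i
    have hxi : 0 ≤ x i := (hM x hx).1 i
    have hyi : 0 ≤ y i := (hM y hy).1 i
    simp only [Pi.add_apply, Pi.smul_apply, smul_eq_mul, hi] at h
    constructor <;> nlinarith
  have hsub : support (x - y) ⊆ s := fun i hi =>
    hs fun h0 => hi (by simp [(hzero i h0).1, (hzero i h0).2])
  obtain rfl : x = y := sub_eq_zero.mp <| hv.eq_zero_of_sum_smul_eq_zero hsub <| by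
    simp [sub_smul, Finset.sum_sub_distrib, (hM x hx).2, (hM y hy).2]
  rw [← hxy, ← add_smul, hab, one_smul]

end

theorem support_subset_of_tendsto {ι M : Type*} [TopologicalSpace M] [T2Space M] [Zero M]
    {f : ℕ → ι → M} {x : ι → M} (hf : Tendsto f atTop (𝓝 x)) {s : Set ι}
    (hs : ∀ k, support (f k) ⊆ s) : support x ⊆ s := fun i hi => by
  by_contra his
  exact hi <| tendsto_nhds_unique ((continuous_apply i).tendsto x |>.comp hf) <|
    tendsto_const_nhds.congr fun k => (notMem_support.mp fun h => his (hs k h)).symm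

theorem exists_strictMono_forall_eq {α : Type*} [Finite α] (f : ℕ → α) :
    ∃ a, ∃ φ : ℕ → ℕ, StrictMono φ ∧ ∀ k, f (φ k) = a := by
  obtain ⟨a, ha⟩ := Finite.exists_infinite_fiber f
  obtain ⟨φ, hφ, hfφ⟩ := extraction_of_frequently_atTop
    (Nat.frequently_atTop_iff_infinite.mpr (Set.infinite_coe_iff.mp ha))
  exact ⟨a, φ, hφ, hfφ⟩

theorem exists_eventually_norm_le_of_linearIndepOn {X ι E : Type*} [TopologicalSpace X]
    [Fintype ι] [NormedAddCommGroup E] [NormedSpace ℝ E] {a : ι → X → E} {b : X → E} {z : X}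
    {s : Set ι} (ha : ∀ i, ContinuousAt (a i) z) (hb : ContinuousAt b z)
    (hli : LinearIndepOn ℝ (fun i => a i z) s) {zs : ℕ → X} (hzs : Tendsto zs atTop (𝓝 z))
    {c : ℕ → ι → ℝ} (hsupp : ∀ k, support (c k) ⊆ s)
    (hc : ∀ k, ∑ i, c k i • a i (zs k) = b (zs k)) :
    ∃ C, ∀ᶠ k in atTop, ‖c k‖ ≤ C := by
  -- Otherwise a limit point of `c k / ‖c k‖` along an unbounded subsequence is a unit vector
  -- supported in `s` with `∑ i, ν₀ i • a i z = 0`.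
  by_contra! hunb
  obtain ⟨φ, hφ, hφc⟩ := extraction_forall_of_frequently fun n : ℕ => hunb n
  have hpos : ∀ k, 0 < ‖c (φ k)‖ := fun k => (Nat.cast_nonneg k).trans_lt (hφc k)
  set ν : ℕ → ι → ℝ := fun k => ‖c (φ k)‖⁻¹ • c (φ k)
  have hν : ∀ k, ν k ∈ Metric.sphere 0 1 := fun k => by
    simp [ν, norm_smul, (hpos k).ne']
  obtain ⟨ν₀, hν₀, ψ, hψ, hνψ⟩ := (isCompact_sphere (0 : ι → ℝ) 1).tendsto_subseq hν
  have hzψ : Tendsto (fun k => zs (φ (ψ k))) atTop (𝓝 z) :=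
    hzs.comp ((hφ.comp hψ).tendsto_atTop)
  have hinv : Tendsto (fun k => ‖c (φ (ψ k))‖⁻¹) atTop (𝓝 0) :=
    (tendsto_atTop_mono (fun k => (hφc k).le) tendsto_natCast_atTop_atTop).inv_tendsto_atTop.comp
      hψ.tendsto_atTop
  have hsum : ∑ i, ν₀ i • a i z = 0 := by
    refine tendsto_nhds_unique (tendsto_finsetSum _ fun i _ =>
      ((continuous_apply i).tendsto ν₀ |>.comp hνψ).smul ((ha i).tendsto.comp hzψ)) ?_
    have := hinv.smul (hb.tendsto.comp hzψ)
    rw [zero_smul] at this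
    refine this.congr fun k => ?_
    simp [ν, ← hc, Finset.smul_sum, mul_smul]
  have hν₀s : support ν₀ ⊆ s :=
    support_subset_of_tendsto hνψ fun k => (support_const_smul_subset _ _).trans (hsupp _)
  simp [hli.eq_zero_of_sum_smul_eq_zero hν₀s hsum] at hν₀

section
variable {E G : Type*} [NormedAddCommGroup E] [NormedSpace ℝ E] [NormedAddCommGroup G]
  [NormedSpace ℝ G]

theorem tangentCone_mono {S T : Set E} (hST : S ⊆ T) {z : E} :
    tangentCone S z ⊆ tangentCone T z := by
  rintro d ⟨zs, ts, hmem, h⟩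
  exact ⟨zs, ts, fun k => hST (hmem k), h⟩

structure IsTangentSeq (S : Set E) (z d : E) (zs : ℕ → E) (ts : ℕ → ℝ) : Prop where
  mem : ∀ k, zs k ∈ S
  tendsto : Tendsto zs atTop (𝓝 z)
  pos : ∀ k, 0 < ts k
  tendsto_smul : Tendsto (fun k => (ts k)⁻¹ • (zs k - z)) atTop (𝓝 d)

variable {S : Set E} {z d : E} {zs : ℕ → E} {ts : ℕ → ℝ}

theorem IsTangentSeq.of_mem_tangentCone (h : d ∈ tangentCone S z) :
    ∃ zs ts, IsTangentSeq S z d zs ts := by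
  obtain ⟨zs, ts, hmem, hz, hpos, -, hd⟩ := h
  exact ⟨zs, ts, hmem, hz, hpos, hd⟩

theorem IsTangentSeq.comp (h : IsTangentSeq S z d zs ts) {φ : ℕ → ℕ} (hφ : StrictMono φ) :
    IsTangentSeq S z d (zs ∘ φ) (ts ∘ φ) :=
  ⟨fun k => h.mem (φ k), h.tendsto.comp hφ.tendsto_atTop, fun k => h.pos (φ k),
    h.tendsto_smul.comp hφ.tendsto_atTop⟩

theorem IsTangentSeq.tendsto_inv_smul_sub (h : IsTangentSeq S z d zs ts) {f : E → G}
    {f' : E →L[ℝ] G} (hf : HasFDerivAt f f' z) :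
    Tendsto (fun k => (ts k)⁻¹ • (f (zs k) - f z)) atTop (𝓝 (f' d)) := by
  simpa using hf.hasFDerivWithinAt (s := Set.univ).lim (tendsto_sub_nhds_zero_iff.mpr h.tendsto)
    (.of_forall fun _ => trivial) h.tendsto_smul

theorem IsTangentSeq.fderiv_nonpos (h : IsTangentSeq S z d zs ts) {f : E → ℝ}
    (hf : DifferentiableAt ℝ f z) (hle : ∀ k, f (zs k) ≤ f z) : fderiv ℝ f z d ≤ 0 :=
  le_of_tendsto (h.tendsto_inv_smul_sub hf.hasFDerivAt) <| .of_forall fun k =>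
    smul_nonpos_of_nonneg_of_nonpos (inv_nonneg.mpr (h.pos k).le) (sub_nonpos.mpr (hle k))

theorem IsTangentSeq.fderiv_eq_zero (h : IsTangentSeq S z d zs ts) {f : E → ℝ}
    (hf : DifferentiableAt ℝ f z) (heq : ∀ k, f (zs k) = f z) : fderiv ℝ f z d = 0 :=
  tendsto_nhds_unique (h.tendsto_inv_smul_sub hf.hasFDerivAt) (by simp [heq])

end

section
variable {F : Vec n × Vec m → Vec m} {g : Vec n × Vec m → Vec l} {Z : Set (Vec n × Vec m)}

theorem apply_nonpos_of_mem_feasSet {z : Vec n × Vec m} (hz : z ∈ feasSet F g Z) (i : Fin l) :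
    g z i ≤ 0 :=
  hz.2.1 i

theorem dgX_add_dgY (i : Fin l) (z : Vec n × Vec m) (dx : Vec n) (dy : Vec m) :
    dgX g i z dx + dgY g i z dy = fderiv ℝ (fun p => g p i) z (dx, dy) := by
  simpa [dgX, dgY] using (fderiv ℝ (fun p => g p i) z).comp_inl_add_comp_inr (dx, dy)

theorem jacLx_add_jacLy (z : Vec n × Vec m) (lam : Vec l) (dx : Vec n) (dy : Vec m) (j : Fin m) :
    jacLx F g z lam dx j + jacLy F g z lam dy j =
      fderiv ℝ (fun z => viLag F g z lam j) z (dx, dy) := by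
  simpa [jacLx, jacLy] using
    (fderiv ℝ (fun z => viLag F g z lam j) z).comp_inl_add_comp_inr (dx, dy)

theorem dotp_gradYg (i : Fin l) (z : Vec n × Vec m) (w : Vec m) :
    dotp (gradYg g i z) w = dgY g i z w := by
  have hw : ((0 : Vec n), w) = ∑ j, w j • ((0 : Vec n), (Pi.single j 1 : Vec m)) := by
    ext <;> simp [Prod.fst_sum, Prod.snd_sum, Finset.sum_apply, Pi.single_apply]
  rw [dgY, hw, map_sum]
  simp only [map_smul, smul_eq_mul, dotp, gradYg, mul_comm]

theorem viLag_eq (z : Vec n × Vec m) (lam : Vec l) :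
    viLag F g z lam = F z + ∑ i, lam i • gradYg g i z := by
  ext j
  simp [viLag, Finset.sum_apply]

theorem sum_smul_gradYg_eq_neg_iff {z : Vec n × Vec m} {lam : Vec l} :
    ∑ i, lam i • gradYg g i z = -F z ↔ ∀ j, F z j + ∑ i, lam i * gradYg g i z j = 0 := by
  rw [eq_neg_iff_add_eq_zero, add_comm, ← viLag_eq, funext_iff]
  rfl

theorem mem_multSet_iff {z : Vec n × Vec m} (hz : ∀ i, g z i ≤ 0) {lam : Vec l} :
    lam ∈ multSet F g z ↔
      0 ≤ lam ∧ ∑ i, lam i • gradYg g i z = -F z ∧ ∀ i, lam i ≠ 0 → g z i = 0 := by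
  have hcompl (hlam : 0 ≤ lam) : ∑ i, lam i * g z i = 0 ↔ ∀ i, lam i ≠ 0 → g z i = 0 := by
    rw [Finset.sum_eq_zero_iff_of_nonpos fun i _ => mul_nonpos_of_nonneg_of_nonpos (hlam i) (hz i)]
    simp only [Finset.mem_univ, true_implies, mul_eq_zero]
    exact forall_congr' fun i => or_iff_not_imp_left
  exact ⟨fun h => ⟨h.1, sum_smul_gradYg_eq_neg_iff.mpr h.2.1, (hcompl h.1).mp h.2.2⟩,
    fun h => ⟨h.1, sum_smul_gradYg_eq_neg_iff.mp h.2.1, (hcompl h.1).mpr h.2.2⟩⟩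

theorem contDiff_fderiv_apply (hg : ContDiff ℝ 2 g) (i : Fin l) (v : Vec n × Vec m) :
    ContDiff ℝ 1 fun z => fderiv ℝ (fun p => g p i) z v :=
  (((contDiff_apply ℝ ℝ i).comp hg).fderiv_right (by norm_num)).clm_apply contDiff_const

theorem continuous_gradYg (hg : ContDiff ℝ 2 g) (i : Fin l) : Continuous (gradYg g i) :=
  continuous_pi fun _ => (contDiff_fderiv_apply hg i _).continuous

theorem isClosed_setOf_mem_multSet (hF : Continuous F) (hg : ContDiff ℝ 2 g) :
    IsClosed {p : (Vec n × Vec m) × Vec l | p.2 ∈ multSet F g p.1} := by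
  have hgc : Continuous g := hg.continuous
  have hgrad (i : Fin l) : Continuous (gradYg g i) := continuous_gradYg hg i
  have hset : {p : (Vec n × Vec m) × Vec l | p.2 ∈ multSet F g p.1} =
      (⋂ i, {p | 0 ≤ p.2 i}) ∩ (⋂ j, {p | F p.1 j + ∑ i, p.2 i * gradYg g i p.1 j = 0}) ∩
        {p | ∑ i, p.2 i * g p.1 i = 0} := by
    ext p
    simp [multSet, and_assoc]
  rw [hset]
  exact ((isClosed_iInter fun i => isClosed_le (by fun_prop) (by fun_prop)).inter
    (isClosed_iInter fun j => isClosed_eq (by fun_prop) (by fun_prop))).inter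
      (isClosed_eq (by fun_prop) (by fun_prop))

theorem exists_mem_multSet_linearIndepOn {z : Vec n × Vec m} (hz : ∀ i, g z i ≤ 0)
    (hne : (multSet F g z).Nonempty) :
    ∃ μ ∈ multSet F g z, LinearIndepOn ℝ (gradYg g · z) (support μ) := by
  obtain ⟨lam, hlam⟩ := hne
  rw [mem_multSet_iff hz] at hlam
  obtain ⟨μ, hμ, hμs, hμv, hli⟩ := exists_linearIndepOn_support_sum_smul_eq (gradYg g · z) hlam.1
  exact ⟨μ, (mem_multSet_iff hz).mpr ⟨hμ, hμv.trans hlam.2.1, fun i hi => hlam.2.2 i (hμs hi)⟩,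
    hli⟩

theorem CRCQ.linearIndepOn {zbar : Vec n × Vec m} {U : Set (Vec n × Vec m)} (h : CRCQ g zbar U)
    {J : Set (Fin l)} (hJ : ∀ i ∈ J, g zbar i = 0) {z : Vec n × Vec m} (hz : z ∈ U)
    (hli : LinearIndepOn ℝ (gradYg g · z) J) : LinearIndepOn ℝ (gradYg g · zbar) J :=
  linearIndepOn_of_finrank_span_image_eq J.toFinite hli (h J hJ z hz)

theorem dotp_viLag_sub_dotp_viLag (z : Vec n × Vec m) (lam μ : Vec l) (w : Vec m) :
    dotp (viLag F g z lam) w - dotp (viLag F g z μ) w = ∑ i, (lam i - μ i) * dgY g i z w := by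
  have hsub : viLag F g z lam - viLag F g z μ = ∑ i, (lam i - μ i) • gradYg g i z := by
    simp [viLag_eq, sub_smul, Finset.sum_sub_distrib]
  simp only [← dotp_gradYg]
  change _ ⬝ᵥ w - _ ⬝ᵥ w = ∑ i, (lam i - μ i) * (_ ⬝ᵥ w)
  rw [← sub_dotProduct, hsub, sum_dotProduct]
  simp [smul_dotProduct]

variable {zbar dz : Vec n × Vec m} {zs : ℕ → Vec n × Vec m} {ts : ℕ → ℝ}

theorem IsTangentSeq.mem_dirCrit (hseq : IsTangentSeq (feasSet F g Z) zbar dz zs ts)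
    (hg : DifferentiableAt ℝ g zbar) {lam : Vec l}
    (hlam : ∀ i, 0 < lam i → fderiv ℝ (fun p => g p i) zbar dz = 0) :
    dz.2 ∈ dirCrit g zbar lam dz.1 := by
  intro i hi
  rw [dgX_add_dgY]
  refine ⟨fun _ => hseq.fderiv_nonpos (differentiableAt_pi.mp hg i) fun k => ?_, hlam i⟩
  exact hi ▸ apply_nonpos_of_mem_feasSet (hseq.mem k) i

theorem sub_mul_dgY_nonneg (hzbar : ∀ i, g zbar i ≤ 0) {lam μ : Vec l}
    (hlam : lam ∈ multSet F g zbar) (hμ : 0 ≤ μ)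
    (hμdz : ∀ i, μ i ≠ 0 → g zbar i = 0 ∧ fderiv ℝ (fun p => g p i) zbar dz = 0)
    (hdz : dz.2 ∈ dirCrit g zbar lam dz.1) {v : Vec m} (hv : v ∈ dirCrit g zbar lam dz.1)
    (i : Fin l) : 0 ≤ (lam i - μ i) * dgY g i zbar (v - dz.2) := by
  obtain ⟨hlam₀, -, hcompl⟩ := (mem_multSet_iff hzbar).mp hlam
  have hw : dgY g i zbar (v - dz.2) =
      (dgX g i zbar dz.1 + dgY g i zbar v) - (dgX g i zbar dz.1 + dgY g i zbar dz.2) := by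
    have : dgY g i zbar (v - dz.2) = dgY g i zbar v - dgY g i zbar dz.2 := by
      simp only [dgY, ← map_sub, Prod.mk_sub_mk, sub_zero]
    rw [this]
    ring
  rcases (hlam₀ i).eq_or_lt with h0 | hpos
  · rcases (hμ i).eq_or_lt with hμ0 | hμpos
    · simp [← h0, ← hμ0]
    · obtain ⟨hact, hD⟩ := hμdz i hμpos.ne'
      have hv' : dgX g i zbar dz.1 + dgY g i zbar v ≤ 0 := (hv i hact).1 h0.symm
      have hdz' : dgX g i zbar dz.1 + dgY g i zbar dz.2 = 0 := by
        rw [dgX_add_dgY, Prod.mk.eta, hD]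
      rw [hw, hdz', ← h0]
      nlinarith
  · have hact := hcompl i hpos.ne'
    rw [hw, (hv i hact).2 hpos, (hdz i hact).2 hpos, sub_self, mul_zero]

theorem IsTangentSeq.tendsto_dotp_viLag {S : Set (Vec n × Vec m)}
    (hseq : IsTangentSeq S zbar dz zs ts) (hF : DifferentiableAt ℝ F zbar)
    (hg : ContDiff ℝ 2 g) {lam : Vec l} (hlam : viLag F g zbar lam = 0) (w : Vec m) :
    Tendsto (fun k => (ts k)⁻¹ * dotp (viLag F g (zs k) lam) w) atTop
      (𝓝 (dotp (jacLx F g zbar lam dz.1 + jacLy F g zbar lam dz.2) w)) := by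
  have hL (j : Fin m) : DifferentiableAt ℝ (fun z => viLag F g z lam j) zbar :=
    (differentiableAt_pi.mp hF j).add <| .fun_sum fun i _ =>
      (((contDiff_fderiv_apply hg i _).differentiable one_ne_zero) zbar).const_mul _
  have := tendsto_finsetSum Finset.univ fun j _ =>
    (hseq.tendsto_inv_smul_sub (hL j).hasFDerivAt).mul_const (w j)
  simp only [hlam, Pi.zero_apply, sub_zero, smul_eq_mul, mul_assoc, ← Finset.mul_sum] at this
  simpa [dotp, jacLx_add_jacLy] using this

theorem IsTangentSeq.solvesAVI (hseq : IsTangentSeq (feasSet F g Z) zbar dz zs ts)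
    (hF : DifferentiableAt ℝ F zbar) (hg : ContDiff ℝ 2 g) (hzbar : ∀ i, g zbar i ≤ 0)
    {lams : ℕ → Vec l} (hlams : ∀ k, lams k ∈ multSet F g (zs k)) {lam : Vec l}
    (hlim : Tendsto lams atTop (𝓝 lam)) (hlam : lam ∈ multSet F g zbar)
    (hact : ∀ k i, lams k i ≠ 0 → g zbar i = 0 ∧ fderiv ℝ (fun p => g p i) zbar dz = 0)
    (hdz : dz.2 ∈ dirCrit g zbar lam dz.1) : solvesAVI F g zbar lam dz.1 dz.2 := by
  refine ⟨hdz, fun v hv => ?_⟩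
  set w := v - dz.2
  set err : ℕ → ℝ := fun k =>
    ∑ i, (lam i - lams k i) * ((ts k)⁻¹ * (dgY g i (zs k) w - dgY g i zbar w))
  have hsplit (k : ℕ) : (ts k)⁻¹ * dotp (viLag F g (zs k) lam) w =
      (ts k)⁻¹ * ∑ i, (lam i - lams k i) * dgY g i zbar w + err k := by
    have h0 : dotp (viLag F g (zs k) (lams k)) w = 0 := by
      simp [show viLag F g (zs k) (lams k) = 0 from funext (hlams k).2.1, dotp]
    rw [← sub_zero (dotp _ w), ← h0, dotp_viLag_sub_dotp_viLag, Finset.mul_sum, Finset.mul_sum,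
      ← Finset.sum_add_distrib]
    exact Finset.sum_congr rfl fun i _ => by ring
  have herr : Tendsto err atTop (𝓝 0) := by
    have hdgY (i : Fin l) : DifferentiableAt ℝ (fun z => dgY g i z w) zbar :=
      (contDiff_fderiv_apply hg i _).differentiable one_ne_zero zbar
    simpa using tendsto_finsetSum Finset.univ fun i _ =>
      ((tendsto_const_nhds (x := lam i)).sub ((continuous_apply i).tendsto lam |>.comp hlim)).mul
        (hseq.tendsto_inv_smul_sub (hdgY i).hasFDerivAt)
  refine le_of_tendsto_of_tendsto herr (hseq.tendsto_dotp_viLag hF hg (funext hlam.2.1) w)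
    (.of_forall fun k => ?_)
  dsimp only
  rw [hsplit k]
  exact le_add_of_nonneg_left <| mul_nonneg (inv_nonneg.mpr (hseq.pos k).le) <|
    Finset.sum_nonneg fun i _ => sub_mul_dgY_nonneg hzbar hlam (hlams k).1 (hact k) hdz hv i

theorem IsTangentSeq.active_of_forall_ne_zero
    (hseq : IsTangentSeq (feasSet F g Z) zbar dz zs ts) (hg : DifferentiableAt ℝ g zbar)
    {lams : ℕ → Vec l} (hlams : ∀ k, lams k ∈ multSet F g (zs k)) {i : Fin l}
    (hi : ∀ k, lams k i ≠ 0) : g zbar i = 0 ∧ fderiv ℝ (fun p => g p i) zbar dz = 0 := by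
  have hgi : DifferentiableAt ℝ (fun p => g p i) zbar := differentiableAt_pi.mp hg i
  have hzero (k : ℕ) : g (zs k) i = 0 :=
    ((mem_multSet_iff (apply_nonpos_of_mem_feasSet (hseq.mem k))).mp (hlams k)).2.2 i (hi k)
  have hbar : g zbar i = 0 :=
    tendsto_nhds_unique (hgi.continuousAt.tendsto.comp hseq.tendsto) (by simp [comp_def, hzero])
  exact ⟨hbar, hseq.fderiv_eq_zero hgi fun k => by rw [hzero, hbar]⟩

theorem exists_subseq_tendsto_mem_multSet (hF : Continuous F) (hg : ContDiff ℝ 2 g)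
    (hz : Tendsto zs atTop (𝓝 zbar)) {lams : ℕ → Vec l}
    (hlams : ∀ k, lams k ∈ multSet F g (zs k)) {J : Set (Fin l)}
    (hJ : ∀ k, support (lams k) ⊆ J) (hli : LinearIndepOn ℝ (gradYg g · zbar) J) :
    ∃ lam ∈ multSet F g zbar, support lam ⊆ J ∧
      ∃ φ : ℕ → ℕ, StrictMono φ ∧ Tendsto (lams ∘ φ) atTop (𝓝 lam) := by
  obtain ⟨C, hC⟩ := exists_eventually_norm_le_of_linearIndepOn (a := gradYg g)
    (fun i => (continuous_gradYg hg i).continuousAt) hF.neg.continuousAt hli hz hJ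
    fun k => sum_smul_gradYg_eq_neg_iff.mpr (hlams k).2.1
  obtain ⟨lam, -, φ, hφ, hlim⟩ := tendsto_subseq_of_frequently_bounded (x := lams)
    (Metric.isBounded_closedBall (x := 0) (r := C))
    (hC.frequently.mono fun k hk => by simpa using hk)
  exact ⟨lam, (isClosed_setOf_mem_multSet hF hg).mem_of_tendsto
    ((hz.comp hφ.tendsto_atTop).prodMk_nhds hlim) (.of_forall fun k => hlams (φ k)),
    support_subset_of_tendsto hlim fun k => hJ (φ k), φ, hφ, hlim⟩

theorem IsTangentSeq.exists_multipliers_const_support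
    (hseq : IsTangentSeq (feasSet F g Z) zbar dz zs ts) {U : Set (Vec n × Vec m)}
    (hU : U ∈ 𝓝 zbar) (hMne : ∀ z ∈ feasSet F g Z ∩ U, (multSet F g z).Nonempty) :
    ∃ (zs' : ℕ → Vec n × Vec m) (ts' : ℕ → ℝ) (lams : ℕ → Vec l) (J : Set (Fin l)),
      IsTangentSeq (feasSet F g Z) zbar dz zs' ts' ∧ (∀ k, zs' k ∈ U) ∧
      (∀ k, lams k ∈ multSet F g (zs' k)) ∧ (∀ k, support (lams k) = J) ∧
      ∀ k, LinearIndepOn ℝ (gradYg g · (zs' k)) J := by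
  obtain ⟨k₀, hk₀⟩ := eventually_atTop.mp (hseq.tendsto.eventually_mem hU)
  have hU' (k : ℕ) : zs (k + k₀) ∈ U := hk₀ _ (Nat.le_add_left _ _)
  have hmult (k : ℕ) : ∃ μ ∈ multSet F g (zs (k + k₀)),
      LinearIndepOn ℝ (gradYg g · (zs (k + k₀))) (support μ) :=
    exists_mem_multSet_linearIndepOn (apply_nonpos_of_mem_feasSet (hseq.mem _))
      (hMne _ ⟨hseq.mem _, hU' k⟩)
  choose μ hμ hli using hmult
  obtain ⟨J, φ, hφ, hJ⟩ := exists_strictMono_forall_eq fun k => support (μ k)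
  exact ⟨_, _, μ ∘ φ, J, (hseq.comp (strictMono_id.add_const k₀)).comp hφ, fun k => hU' (φ k),
    fun k => hμ (φ k), hJ, fun k => hJ k ▸ hli (φ k)⟩

end

/-- Proposition 3.2.2 (inclusion part): under CRCQ, every tangent direction
`dz = (dx, dy) ∈ T(z̄; 𝓕)` lies in `T(z̄; Z)` and there is an extreme point `λ̄` of the
multiplier polyhedron `M(z̄)` such that `dy` solves
`AVI(∇_x L(z̄,λ̄) dx, ∇_y L(z̄,λ̄), K(z̄,λ̄;dx))`; i.e. `T(z̄;𝓕) ⊆ 𝓛^e(z̄;𝓕)`. -/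
theorem stmt_3 {n m l : ℕ}
    (F : Vec n × Vec m → Vec m) (g : Vec n × Vec m → Vec l)
    (Z : Set (Vec n × Vec m))
    (hF : ContDiff ℝ 1 F) (hg : ContDiff ℝ 2 g)
    (zbar : Vec n × Vec m) (hzbar : zbar ∈ feasSet F g Z)
    (U : Set (Vec n × Vec m)) (hU : U ∈ 𝓝 zbar)
    (hCRCQ : CRCQ g zbar U)
    (hMne : ∀ z ∈ feasSet F g Z ∩ U, (multSet F g z).Nonempty)
    (dz : Vec n × Vec m) (hdz : dz ∈ tangentCone (feasSet F g Z) zbar) :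
    dz ∈ tangentCone Z zbar ∧
    ∃ lam ∈ (multSet F g zbar).extremePoints ℝ, solvesAVI F g zbar lam dz.1 dz.2 := by
  refine ⟨tangentCone_mono (fun z hz => hz.1) hdz, ?_⟩
  obtain ⟨zs, ts, hseq⟩ := IsTangentSeq.of_mem_tangentCone hdz
  obtain ⟨zs, ts, lams, J, hseq, hzU, hlams, hJ, hli⟩ :=
    hseq.exists_multipliers_const_support hU hMne
  have hDg : DifferentiableAt ℝ g zbar := hg.differentiable two_ne_zero zbar
  have hJact (i : Fin l) (hi : i ∈ J) : g zbar i = 0 ∧ fderiv ℝ (fun p => g p i) zbar dz = 0 :=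
    hseq.active_of_forall_ne_zero hDg hlams fun k => (hJ k).superset hi
  have hliBar := hCRCQ.linearIndepOn (fun i hi => (hJact i hi).1) (hzU 0) (hli 0)
  obtain ⟨lam, hlam, hlamJ, φ, hφ, hlim⟩ := exists_subseq_tendsto_mem_multSet hF.continuous hg
    hseq.tendsto hlams (fun k => (hJ k).subset) hliBar
  have hzbar' : ∀ i, g zbar i ≤ 0 := apply_nonpos_of_mem_feasSet hzbar
  refine ⟨lam, mem_extremePoints_of_linearIndepOn
    (fun μ hμ => ((mem_multSet_iff hzbar').mp hμ).imp_right And.left) hlam hlamJ hliBar,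
    (hseq.comp hφ).solvesAVI (hF.differentiable one_ne_zero zbar) hg hzbar'
      (fun k => hlams (φ k)) hlim hlam (fun k i hi => hJact i ((hJ (φ k)).subset hi))
      (hseq.mem_dirCrit hDg fun i hi => (hJact i (hlamJ hi.ne')).2)⟩
end
end

section
/- (Proposition 3.2.3, part 2.) Assume the MPEC setup with F and g continuously differentiable, let z̄ ∈ 𝓕 with M(z̄) nonempty, and let dx ∈ ℝ^n. Let λ ∈ M(z̄) be any optimal solution of the linear program: maximize Σ_{i=1}^{ℓ} λ'_i ⟨∇_x g_i(z̄), dx⟩ over λ' ∈ M(z̄). Then K(z̄, λ; dx) equals the set of optimal solutions of the linear program: minimize ⟨dy, F(z̄)⟩ over dy ∈ ℝ^m subject to ⟨∇_x g_i(z̄), dx⟩ + ⟨∇_y g_i(z̄), dy⟩ ≤ 0 for all i ∈ 𝓘(z̄). In particular, K(z̄, λ; dx) is the same set for every such optimal λ. -/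
open Filter Topology BigOperators

noncomputable section

variable {n m l : ℕ}

/-!
Because `λ ∈ M(z̄)` vanishes off the active set and `F(z̄) = -Σ λᵢ ∇_y gᵢ(z̄)`,
`⟨dy, F(z̄)⟩ = Σ λᵢ ⟨∇_x gᵢ, dx⟩ - Σ λᵢ (⟨∇_x gᵢ, dx⟩ + ⟨∇_y gᵢ, dy⟩)`.
On the feasible set of the linear program every term of the second sum is `≤ 0`, so the
objective is bounded below by `Σ λᵢ ⟨∇_x gᵢ, dx⟩`, with equality exactly on `K(z̄, λ; dx)`.
The dual of the linear program is the maximisation of `Σ λ'ᵢ ⟨∇_x gᵢ(z̄), dx⟩` over `M(z̄)`,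
so by strong duality (Farkas' lemma, which rests on finitely generated cones being closed)
every optimal `dy` attains the bound given by an optimal `λ`.
-/

section FinsetCone

variable {E ι : Type*}

section Algebraic

variable [AddCommGroup E] [Module ℝ E]

def finsetCone (s : Finset ι) (v : ι → E) : PointedCone ℝ E where
  carrier := {x | ∃ μ : ι → ℝ, (∀ i ∈ s, 0 ≤ μ i) ∧ ∑ i ∈ s, μ i • v i = x}
  add_mem' := by
    rintro _ _ ⟨μ, hμ, rfl⟩ ⟨ν, hν, rfl⟩
    exact ⟨μ + ν, fun i hi => add_nonneg (hμ i hi) (hν i hi), by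
      simp only [Pi.add_apply, add_smul, Finset.sum_add_distrib]⟩
  zero_mem' := ⟨0, fun _ _ => le_rfl, by simp⟩
  smul_mem' := by
    rintro c _ ⟨μ, hμ, rfl⟩
    exact ⟨(c : ℝ) • μ, fun i hi => mul_nonneg c.2 (hμ i hi), by
      simp only [Pi.smul_apply, smul_eq_mul, mul_smul, ← Finset.smul_sum, Nonneg.coe_smul]⟩

variable {s t : Finset ι} {v : ι → E} {x : E}

lemma mem_finsetCone :
    x ∈ finsetCone s v ↔ ∃ μ : ι → ℝ, (∀ i ∈ s, 0 ≤ μ i) ∧ ∑ i ∈ s, μ i • v i = x :=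
  Iff.rfl

lemma mem_finsetCone_of_mem {i : ι} (hi : i ∈ s) : v i ∈ finsetCone s v := by
  classical
  exact ⟨Pi.single i 1, fun j _ => (Pi.single_nonneg.mpr zero_le_one : (0 : ι → ℝ) ≤ _) j, by
    simp [Pi.single_apply, Finset.sum_ite_eq', hi]⟩

lemma finsetCone_mono (h : t ⊆ s) : finsetCone t v ≤ finsetCone s v := by
  classical
  rintro _ ⟨μ, hμ, rfl⟩
  refine ⟨fun i => if i ∈ t then μ i else 0, fun i _ => ?_, ?_⟩
  · dsimp only
    split_ifs with hi
    exacts [hμ i hi, le_rfl]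
  · rw [← Finset.sum_subset h fun i _ hi => by simp [hi]]
    exact Finset.sum_congr rfl fun i hi => by simp [hi]

lemma finsetCone_eq_image :
    (finsetCone s v : Set E) =
      Fintype.linearCombination ℝ (fun i : s => v i) '' Set.Ici 0 := by
  classical
  ext x
  simp only [SetLike.mem_coe, mem_finsetCone, Set.mem_image, Set.mem_Ici,
    Fintype.linearCombination_apply]
  constructor
  · rintro ⟨μ, hμ, rfl⟩
    exact ⟨fun i => μ i, fun i => hμ i i.2, Finset.sum_coe_sort s fun i => μ i • v i⟩
  · rintro ⟨ν, hν, rfl⟩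
    refine ⟨fun i => if h : i ∈ s then ν ⟨i, h⟩ else 0, fun i hi => by simpa [hi] using hν _, ?_⟩
    rw [← Finset.sum_coe_sort s]
    exact Finset.sum_congr rfl fun i _ => by simp

lemma exists_pos_relation_of_not_linearIndependent
    (hv : ¬ LinearIndependent ℝ (fun i : s => v i)) :
    ∃ C : ι → ℝ, ∑ i ∈ s, C i • v i = 0 ∧ ∃ j ∈ s, 0 < C j := by
  classical
  obtain ⟨c, hc, j, hj⟩ := Fintype.not_linearIndependent_iff.mp hv
  let C : ι → ℝ := fun i => if h : i ∈ s then c ⟨i, h⟩ else 0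
  have hC : ∑ i ∈ s, C i • v i = 0 := by
    rw [← Finset.sum_coe_sort s, ← hc]
    exact Finset.sum_congr rfl fun i _ => by simp [C]
  rcases hj.lt_or_gt with hneg | hpos
  · exact ⟨-C, by simp [neg_smul, hC], j, j.2, by simpa [C] using hneg⟩
  · exact ⟨C, hC, j, j.2, by simpa [C] using hpos⟩

/-- Conic Carathéodory step: a linear relation with a positive coefficient lets one
generator be dropped from any conic combination. -/
lemma finsetCone_eq_biUnion_erase [DecidableEq ι]
    (hv : ¬ LinearIndependent ℝ (fun i : s => v i)) :
    (finsetCone s v : Set E) = ⋃ i ∈ s, (finsetCone (s.erase i) v : Set E) := by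
  refine subset_antisymm ?_ (Set.iUnion₂_subset fun i _ => finsetCone_mono (s.erase_subset i))
  rintro _ ⟨μ, hμ, rfl⟩
  obtain ⟨C, hC, j, hjs, hj⟩ := exists_pos_relation_of_not_linearIndependent hv
  set P := s.filter (0 < C ·)
  obtain ⟨i₀, hi₀P, hi₀⟩ := P.exists_min_image (fun i => μ i / C i) ⟨j, by simp [P, hjs, hj]⟩
  obtain ⟨hi₀s, hCi₀⟩ := Finset.mem_filter.mp hi₀P
  set t := μ i₀ / C i₀
  have ht : 0 ≤ t := div_nonneg (hμ i₀ hi₀s) hCi₀.le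
  have hμ' : ∀ i ∈ s, 0 ≤ μ i - t * C i := by
    intro i hi
    rcases lt_or_ge 0 (C i) with hCi | hCi
    · have := hi₀ i (Finset.mem_filter.mpr ⟨hi, hCi⟩)
      rw [le_div_iff₀ hCi] at this
      linarith
    · nlinarith [hμ i hi]
  have hsum : ∑ i ∈ s, (μ i - t * C i) • v i = ∑ i ∈ s, μ i • v i := by
    simp only [sub_smul, mul_smul, Finset.sum_sub_distrib, ← Finset.smul_sum, hC, smul_zero,
      sub_zero]
  refine Set.mem_biUnion hi₀s ⟨fun i => μ i - t * C i,
    fun i hi => hμ' i (Finset.mem_of_mem_erase hi), ?_⟩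
  rw [Finset.sum_erase _ (by simp [t, div_mul_cancel₀ _ hCi₀.ne']), hsum]

end Algebraic

variable [NormedAddCommGroup E] [NormedSpace ℝ E] {s : Finset ι} {v : ι → E} {c : E}

lemma isClosed_finsetCone_of_linearIndependent (hv : LinearIndependent ℝ (fun i : s => v i)) :
    IsClosed (finsetCone s v : Set E) := by
  rw [finsetCone_eq_image]
  exact (LinearMap.isClosedEmbedding_of_injective (LinearMap.ker_eq_bot.mpr
    hv.fintypeLinearCombination_injective)).isClosedMap _ isClosed_Ici

theorem isClosed_finsetCone (s : Finset ι) (v : ι → E) : IsClosed (finsetCone s v : Set E) := by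
  classical
  induction s using Finset.strongInduction with
  | H s ih =>
    by_cases hv : LinearIndependent ℝ (fun i : s => v i)
    · exact isClosed_finsetCone_of_linearIndependent hv
    · rw [finsetCone_eq_biUnion_erase hv]
      exact s.finite_toSet.isClosed_biUnion fun i hi => ih _ (Finset.erase_ssubset hi)

theorem mem_finsetCone_of_forall_nonneg
    (h : ∀ f : StrongDual ℝ E, (∀ i ∈ s, 0 ≤ f (v i)) → 0 ≤ f c) : c ∈ finsetCone s v := by
  by_contra hc
  let K : ProperCone ℝ E := ⟨finsetCone s v, isClosed_finsetCone s v⟩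
  obtain ⟨f, hfK, hfc⟩ := K.hyperplane_separation_point (x₀ := c) hc
  exact (h f fun i hi => hfK _ (mem_finsetCone_of_mem hi)).not_gt hfc

end FinsetCone

section LinearProgramming

variable {κ ι : Type*} [Fintype κ]

lemma exists_dotProduct_of_strongDual_prod (f : StrongDual ℝ ((κ → ℝ) × ℝ)) :
    ∃ d : κ → ℝ, ∀ y t, f (y, t) = y ⬝ᵥ d + t * f (0, 1) := by
  classical
  refine ⟨fun j => f (Pi.single j 1, 0), fun y t => ?_⟩
  have hyt : (y, t) =
      ∑ j, y j • ((Pi.single j 1 : κ → ℝ), (0 : ℝ)) + t • ((0 : κ → ℝ), (1 : ℝ)) := by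
    ext j <;> simp [Prod.fst_sum, Prod.snd_sum, Finset.sum_apply, Pi.single_apply]
  rw [hyt, map_add, map_sum]
  simp only [map_smul, smul_eq_mul, dotProduct]

theorem exists_dual_feasible_of_isMinOn (s : Finset ι) (a : ι → κ → ℝ) (b : ι → ℝ)
    (c : κ → ℝ) {y₀ : κ → ℝ} (hy₀ : ∀ i ∈ s, a i ⬝ᵥ y₀ ≤ b i)
    (hmin : IsMinOn (· ⬝ᵥ c) {y | ∀ i ∈ s, a i ⬝ᵥ y ≤ b i} y₀) :
    ∃ μ : ι → ℝ, (∀ i ∈ s, 0 ≤ μ i) ∧ c + ∑ i ∈ s, μ i • a i = 0 ∧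
      y₀ ⬝ᵥ c ≤ -∑ i ∈ s, μ i * b i := by
  let v : Option ι → (κ → ℝ) × ℝ := fun o => o.elim (0, 1) fun i => (a i, b i)
  have hcone : (-c, -(y₀ ⬝ᵥ c)) ∈ finsetCone s.insertNone v := by
    refine mem_finsetCone_of_forall_nonneg fun f hf => ?_
    obtain ⟨d, hd⟩ := exists_dotProduct_of_strongDual_prod f
    set τ := f (0, 1)
    have hτ : 0 ≤ τ := hf none (by simp)
    have ha : ∀ i ∈ s, 0 ≤ a i ⬝ᵥ d + b i * τ := fun i hi => by
      have := hf (some i) (Finset.mem_insertNone.mpr fun _ h => Option.some_inj.mp h ▸ hi)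
      rwa [show v (some i) = (a i, b i) from rfl, hd] at this
    -- `y₀ - d` satisfies the constraints scaled by `1 + τ`
    set y := (1 + τ)⁻¹ • (y₀ - d)
    have hy : ∀ i ∈ s, a i ⬝ᵥ y ≤ b i := fun i hi => by
      rw [dotProduct_smul, smul_eq_mul, inv_mul_le_iff₀ (by linarith), dotProduct_sub]
      nlinarith [hy₀ i hi, ha i hi]
    have := isMinOn_iff.mp hmin y hy
    rw [smul_dotProduct, smul_eq_mul, le_inv_mul_iff₀ (by linarith), sub_dotProduct] at this
    rw [hd, neg_dotProduct, dotProduct_comm c d]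
    nlinarith
  obtain ⟨ν, hν, hsum⟩ := hcone
  rw [Finset.sum_insertNone] at hsum
  refine ⟨fun i => ν (some i), fun i hi => hν (some i) (by simpa using hi), ?_, ?_⟩
  · have := congrArg Prod.fst hsum
    simp only [Prod.fst_add, Prod.fst_sum, Prod.smul_fst, v, Option.elim, smul_zero,
      zero_add] at this
    rw [this, add_neg_cancel]
  · have := congrArg Prod.snd hsum
    simp only [Prod.snd_add, Prod.snd_sum, Prod.smul_snd, v, Option.elim, smul_eq_mul,
      mul_one] at this
    linarith [hν none (by simp)]

end LinearProgramming

section MPEC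

variable {F : Vec n × Vec m → Vec m} {g : Vec n × Vec m → Vec l}
  {Z : Set (Vec n × Vec m)} {zbar : Vec n × Vec m} {lam : Vec l} {dx : Vec n} {dy : Vec m}

lemma dotp_eq_dotProduct {k : ℕ} (a b : Vec k) : dotp a b = a ⬝ᵥ b := rfl

lemma dgY_eq_dotProduct (g : Vec n × Vec m → Vec l) (i : Fin l) (z : Vec n × Vec m)
    (dy : Vec m) : dgY g i z dy = gradYg g i z ⬝ᵥ dy := by
  classical
  have hdy : ((0 : Vec n), dy) = ∑ j, dy j • ((0 : Vec n), (Pi.single j 1 : Vec m)) := by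
    ext j <;> simp [Prod.fst_sum, Prod.snd_sum, Finset.sum_apply, Pi.single_apply]
  rw [dgY, hdy, map_sum]
  simp only [map_smul, smul_eq_mul, dotProduct, gradYg, mul_comm]

/-- The feasible set of the linear program in the theorem. -/
def linearizedCone (g : Vec n × Vec m → Vec l) (zbar : Vec n × Vec m) (dx : Vec n) :
    Set (Vec m) :=
  {dy | ∀ i, g zbar i = 0 → dgX g i zbar dx + dgY g i zbar dy ≤ 0}

lemma eq_zero_of_mem_multSet (hz : zbar ∈ feasSet F g Z) (hlam : lam ∈ multSet F g zbar)
    {i : Fin l} (hi : g zbar i ≠ 0) : lam i = 0 := by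
  have hterm : ∀ j, lam j * g zbar j ≤ 0 := fun j =>
    mul_nonpos_of_nonneg_of_nonpos (hlam.1 j) (hz.2.1 j)
  have := (Finset.sum_eq_zero_iff_of_nonpos fun j _ => hterm j).mp hlam.2.2 i (Finset.mem_univ i)
  exact (mul_eq_zero.mp this).resolve_right hi

lemma dotp_eq_sub_of_mem_multSet (hlam : lam ∈ multSet F g zbar) (dx : Vec n) (dy : Vec m) :
    dotp dy (F zbar) = ∑ i, lam i * dgX g i zbar dx -
      ∑ i, lam i * (dgX g i zbar dx + dgY g i zbar dy) := by
  have hF : F zbar = -∑ i, lam i • gradYg g i zbar := by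
    funext j
    simp [Finset.sum_apply, eq_neg_iff_add_eq_zero, hlam.2.1 j]
  rw [dotp_eq_dotProduct, dotProduct_comm, hF]
  simp only [neg_dotProduct, sum_dotProduct, smul_dotProduct, smul_eq_mul, dgY_eq_dotProduct,
    mul_add, Finset.sum_add_distrib]
  ring

lemma mul_nonpos_of_mem_linearizedCone (hz : zbar ∈ feasSet F g Z)
    (hlam : lam ∈ multSet F g zbar) (hdy : dy ∈ linearizedCone g zbar dx) (i : Fin l) :
    lam i * (dgX g i zbar dx + dgY g i zbar dy) ≤ 0 := by
  by_cases hi : g zbar i = 0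
  · exact mul_nonpos_of_nonneg_of_nonpos (hlam.1 i) (hdy i hi)
  · rw [eq_zero_of_mem_multSet hz hlam hi, zero_mul]

lemma sum_le_dotp_of_mem_linearizedCone (hz : zbar ∈ feasSet F g Z)
    (hlam : lam ∈ multSet F g zbar) (hdy : dy ∈ linearizedCone g zbar dx) :
    ∑ i, lam i * dgX g i zbar dx ≤ dotp dy (F zbar) := by
  rw [dotp_eq_sub_of_mem_multSet hlam dx dy, le_sub_self_iff]
  exact Finset.sum_nonpos fun i _ => mul_nonpos_of_mem_linearizedCone hz hlam hdy i

lemma mem_dirCrit_iff (hz : zbar ∈ feasSet F g Z) (hlam : lam ∈ multSet F g zbar) :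
    dy ∈ dirCrit g zbar lam dx ↔
      dy ∈ linearizedCone g zbar dx ∧ dotp dy (F zbar) ≤ ∑ i, lam i * dgX g i zbar dx := by
  rw [dotp_eq_sub_of_mem_multSet hlam dx dy, sub_le_self_iff]
  constructor
  · intro hK
    have hdy : dy ∈ linearizedCone g zbar dx := fun i hi =>
      (hlam.1 i).eq_or_lt.elim (fun h => (hK i hi).1 h.symm) fun h => ((hK i hi).2 h).le
    refine ⟨hdy, Finset.sum_nonneg fun i _ => ?_⟩
    by_cases hi : g zbar i = 0
    · rcases (hlam.1 i).eq_or_lt with h | h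
      · rw [← h, zero_mul]
      · rw [(hK i hi).2 h, mul_zero]
    · rw [eq_zero_of_mem_multSet hz hlam hi, zero_mul]
  · rintro ⟨hdy, hsum⟩ i hi
    have hnonpos : ∀ j ∈ Finset.univ, lam j * (dgX g j zbar dx + dgY g j zbar dy) ≤ 0 :=
      fun j _ => mul_nonpos_of_mem_linearizedCone hz hlam hdy j
    have hterms := (Finset.sum_eq_zero_iff_of_nonpos hnonpos).mp
      (le_antisymm (Finset.sum_nonpos hnonpos) hsum)
    exact ⟨fun _ => hdy i hi, fun hpos =>
      (mul_eq_zero.mp (hterms i (Finset.mem_univ i))).resolve_left hpos.ne'⟩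

lemma exists_mem_multSet_dotp_le (hdy : dy ∈ linearizedCone g zbar dx)
    (hmin : ∀ dy' ∈ linearizedCone g zbar dx, dotp dy (F zbar) ≤ dotp dy' (F zbar)) :
    ∃ ν ∈ multSet F g zbar, dotp dy (F zbar) ≤ ∑ i, ν i * dgX g i zbar dx := by
  set A := Finset.univ.filter (g zbar · = 0)
  have hfeas : ∀ dy', (∀ i ∈ A, gradYg g i zbar ⬝ᵥ dy' ≤ -dgX g i zbar dx) ↔
      dy' ∈ linearizedCone g zbar dx := fun dy' => by
    simp only [A, Finset.mem_filter, Finset.mem_univ, true_and, ← dgY_eq_dotProduct,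
      le_neg_iff_add_nonpos_left]
    rfl
  obtain ⟨μ, hμ, hstat, hval⟩ := exists_dual_feasible_of_isMinOn A (fun i => gradYg g i zbar)
    (fun i => -dgX g i zbar dx) (F zbar) ((hfeas dy).mpr hdy)
    (isMinOn_iff.mpr fun dy' hdy' => hmin dy' ((hfeas dy').mp hdy'))
  let ν : Vec l := fun i => if g zbar i = 0 then μ i else 0
  have hν : ∀ x : Fin l → ℝ, ∑ i, ν i * x i = ∑ i ∈ A, μ i * x i := fun x => by
    rw [Finset.sum_filter]
    exact Finset.sum_congr rfl fun i _ => by split_ifs <;> simp [ν, *]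
  refine ⟨ν, ⟨fun i => ?_, fun j => ?_, Finset.sum_eq_zero fun i _ => ?_⟩, ?_⟩
  · by_cases hi : g zbar i = 0
    · simpa [ν, hi] using hμ i (by simp [A, hi])
    · simp [ν, hi]
  · rw [hν]
    simpa [Finset.sum_apply] using congrFun hstat j
  · by_cases hi : g zbar i = 0 <;> simp [ν, hi]
  · simpa [hν, dotp_eq_dotProduct] using hval

end MPEC

theorem stmt_5_general {n m l : ℕ}
    (F : Vec n × Vec m → Vec m) (g : Vec n × Vec m → Vec l)
    (Z : Set (Vec n × Vec m))
    (zbar : Vec n × Vec m) (hzbar : zbar ∈ feasSet F g Z)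
    (dx : Vec n) (lam : Vec l) (hlam : lam ∈ multSet F g zbar)
    (hopt : ∀ lam' ∈ multSet F g zbar,
      ∑ i, lam' i * dgX g i zbar dx ≤ ∑ i, lam i * dgX g i zbar dx) :
    dirCrit g zbar lam dx =
      {dy : Vec m |
        (∀ i, g zbar i = 0 → dgX g i zbar dx + dgY g i zbar dy ≤ 0) ∧
        ∀ dy' : Vec m, (∀ i, g zbar i = 0 → dgX g i zbar dx + dgY g i zbar dy' ≤ 0) →
          dotp dy (F zbar) ≤ dotp dy' (F zbar)} := by
  ext dy
  rw [mem_dirCrit_iff hzbar hlam]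
  constructor
  · rintro ⟨hdy, hval⟩
    exact ⟨hdy, fun dy' hdy' =>
      hval.trans (sum_le_dotp_of_mem_linearizedCone hzbar hlam hdy')⟩
  · rintro ⟨hdy, hmin⟩
    obtain ⟨ν, hν, hval⟩ := exists_mem_multSet_dotp_le hdy hmin
    exact ⟨hdy, hval.trans (hopt ν hν)⟩

/-- Proposition 3.2.3, part 2: if `λ ∈ M(z̄)` maximizes `Σ_i λ'_i ⟨∇_x g_i(z̄), dx⟩`
over `M(z̄)`, then `K(z̄, λ; dx)` is exactly the optimal solution set of the linear
program: minimize `⟨dy, F(z̄)⟩` subject to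
`⟨∇_x g_i(z̄), dx⟩ + ⟨∇_y g_i(z̄), dy⟩ ≤ 0` for all active `i`.
In particular `K(z̄, λ; dx)` does not depend on the choice of such an optimal `λ`. -/
theorem stmt_5 {n m l : ℕ}
    (F : Vec n × Vec m → Vec m) (g : Vec n × Vec m → Vec l)
    (Z : Set (Vec n × Vec m))
    (hF : ContDiff ℝ 1 F) (hg : ContDiff ℝ 1 g)
    (zbar : Vec n × Vec m) (hzbar : zbar ∈ feasSet F g Z)
    (hMne : (multSet F g zbar).Nonempty)
    (dx : Vec n) (lam : Vec l) (hlam : lam ∈ multSet F g zbar)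
    (hopt : ∀ lam' ∈ multSet F g zbar,
      ∑ i, lam' i * dgX g i zbar dx ≤ ∑ i, lam i * dgX g i zbar dx) :
    dirCrit g zbar lam dx =
      {dy : Vec m |
        (∀ i, g zbar i = 0 → dgX g i zbar dx + dgY g i zbar dy ≤ 0) ∧
        ∀ dy' : Vec m, (∀ i, g zbar i = 0 → dgX g i zbar dx + dgY g i zbar dy' ≤ 0) →
          dotp dy (F zbar) ≤ dotp dy' (F zbar)} :=
  stmt_5_general F g Z zbar hzbar dx lam hlam hopt
end
end
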